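/- arXiv:1711.08656 — 4 statements merged into one kernel-verified Lean document; each statement's English description precedes it below -/
import Mathlib

section
/- Let κ ≥ ℵ₀ be a cardinal. The countable Cartesian power (MJ(κ))^ℕ of the metric hedgehog with κ spines, with the product topology, is universal in the class of all metrizable topological spaces of weight κ: it is itself metrizable of weight κ, and every metrizable space of weight κ embeds into it (is homeomorphic to a subspace of it). -/
open Set Topology Cardinal

universe u v

/-- The equivalence relation on `[0,1] × I` identifying all points with first coordinate `0`. -/
def hedgehogSetoid (I : Type u) : Setoid (Set.Icc (0:ℝ) 1 × I) where
  r p q := ((p.1 : ℝ) = 0 ∧ (q.1 : ℝ) = 0) ∨ p = q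
  iseqv := by
    refine ⟨fun p => Or.inr rfl, ?_, ?_⟩
    · rintro p q (⟨h1, h2⟩ | rfl)
      · exact Or.inl ⟨h2, h1⟩
      · exact Or.inr rfl
    · rintro p q r (⟨h1, h2⟩ | rfl) hqr
      · rcases hqr with ⟨h3, h4⟩ | rfl
        · exact Or.inl ⟨h1, h4⟩
        · exact Or.inl ⟨h1, h2⟩
      · exact hqr

/-- The hedgehog with spines indexed by `I`, as a set (quotient of `[0,1] × I`). -/
abbrev Hedgehog (I : Type u) := Quotient (hedgehogSetoid I)

/-- The product topology on `[0,1] × I`, where `[0,1]` carries the usual topology and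
`I` carries the discrete topology. -/
def hedgehogBaseTop (I : Type u) : TopologicalSpace (Set.Icc (0:ℝ) 1 × I) :=
  @instTopologicalSpaceProd _ _ inferInstance ⊥

/-- The quotient topology on the hedgehog: the quotient hedgehog `J(κ)`. -/
def quotHedgehogTop (I : Type u) : TopologicalSpace (Hedgehog I) :=
  TopologicalSpace.coinduced (Quotient.mk (hedgehogSetoid I)) (hedgehogBaseTop I)

/-- The projection `π_κ : J(κ) → [0,1]`, sending `(t, j)` to `t`. -/
def hedgehogPiKappa {I : Type u} : Hedgehog I → Set.Icc (0:ℝ) 1 :=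
  Quotient.lift Prod.fst (by
    rintro p q (⟨h1, h2⟩ | rfl)
    · exact Subtype.ext (h1.trans h2.symm)
    · rfl)

open Classical in
/-- The projection `π_i : J(κ) → [0,1]`, sending `(t, j)` to `t` if `j = i` and to `0`
otherwise. -/
noncomputable def hedgehogProj {I : Type u} (i : I) : Hedgehog I → Set.Icc (0:ℝ) 1 :=
  Quotient.lift (fun p => if p.2 = i then p.1 else ⟨0, by norm_num⟩) (by
    rintro p q (⟨h1, h2⟩ | rfl)
    · have hp : p.1 = (⟨0, by norm_num⟩ : Set.Icc (0:ℝ) 1) := Subtype.ext h1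
      have hq : q.1 = (⟨0, by norm_num⟩ : Set.Icc (0:ℝ) 1) := Subtype.ext h2
      split_ifs <;> simp [hp, hq]
    · rfl)

open Classical in
/-- The hedgehog metric: `d((t,i),(s,j)) = |t - s|` if `i = j` and `t + s` otherwise.
(It is defined via representatives; the formula does not depend on the choice of
representatives.) -/
noncomputable def hedgehogDist {I : Type u} (x y : Hedgehog I) : ℝ :=
  if x.out.2 = y.out.2 then |(x.out.1 : ℝ) - (y.out.1 : ℝ)|
  else (x.out.1 : ℝ) + (y.out.1 : ℝ)

/-- The metric hedgehog `MJ(κ)`: the hedgehog equipped with the hedgehog metric. -/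
noncomputable def metricHedgehog (I : Type u) : MetricSpace (Hedgehog I) where
  dist := hedgehogDist
  dist_self := by
    intro x
    show hedgehogDist x x = 0
    unfold hedgehogDist
    rw [if_pos rfl, sub_self, abs_zero]
  dist_comm := by
    intro x y
    show hedgehogDist x y = hedgehogDist y x
    unfold hedgehogDist
    rcases eq_or_ne x.out.2 y.out.2 with h | h
    · rw [if_pos h, if_pos h.symm, abs_sub_comm]
    · rw [if_neg h, if_neg (Ne.symm h), add_comm]
  dist_triangle := by
    intro x y z
    show hedgehogDist x z ≤ hedgehogDist x y + hedgehogDist y z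
    unfold hedgehogDist
    have hx0 : (0:ℝ) ≤ x.out.1 := x.out.1.2.1
    have hy0 : (0:ℝ) ≤ y.out.1 := y.out.1.2.1
    have hz0 : (0:ℝ) ≤ z.out.1 := z.out.1.2.1
    have hxy : |(x.out.1:ℝ) - y.out.1| ≤ (x.out.1:ℝ) + y.out.1 :=
      abs_le.mpr ⟨by linarith, by linarith⟩
    have hyz : |(y.out.1:ℝ) - z.out.1| ≤ (y.out.1:ℝ) + z.out.1 :=
      abs_le.mpr ⟨by linarith, by linarith⟩
    have hxz : |(x.out.1:ℝ) - z.out.1| ≤ (x.out.1:ℝ) + z.out.1 :=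
      abs_le.mpr ⟨by linarith, by linarith⟩
    have htri := abs_sub_le (x.out.1:ℝ) (y.out.1:ℝ) (z.out.1:ℝ)
    have h1 := le_abs_self ((x.out.1:ℝ) - y.out.1)
    have h2 := neg_abs_le ((x.out.1:ℝ) - y.out.1)
    have h3 := le_abs_self ((y.out.1:ℝ) - z.out.1)
    have h4 := neg_abs_le ((y.out.1:ℝ) - z.out.1)
    split_ifs <;> try linarith
    all_goals simp_all
  eq_of_dist_eq_zero := by
    intro x y h
    replace h : hedgehogDist x y = 0 := h
    unfold hedgehogDist at h
    have hx0 : (0:ℝ) ≤ x.out.1 := x.out.1.2.1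
    have hy0 : (0:ℝ) ≤ y.out.1 := y.out.1.2.1
    rw [← Quotient.out_eq x, ← Quotient.out_eq y]
    split_ifs at h with hc
    · have h1 : (x.out.1:ℝ) = y.out.1 := by
        have := abs_eq_zero.mp h
        linarith
      have : x.out = y.out := Prod.ext (Subtype.ext h1) hc
      rw [this]
    · exact Quotient.sound (Or.inl ⟨by linarith, by linarith⟩)

/-- The topology of the metric hedgehog `MJ(κ)`. -/
noncomputable def metricHedgehogTop (I : Type u) : TopologicalSpace (Hedgehog I) :=
  (metricHedgehog I).toUniformSpace.toTopologicalSpace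

/-- The bijection `Φ` from the hedgehog onto the axes `L(κ)` of the cube `[0,1]^I`,
viewed as a map into the cube: `Φ(t,i)(j) = t` if `j = i` and `0` otherwise. -/
noncomputable def hedgehogPhi {I : Type u} : Hedgehog I → (I → Set.Icc (0:ℝ) 1) :=
  fun x j => hedgehogProj j x

/-- The topology of the compact hedgehog `ΛJ(κ)`: the topology transported along `Φ`
from the subspace `L(κ)` of the Tychonoff cube `[0,1]^I`, i.e. the topology induced by `Φ`
from the product topology. -/
noncomputable def compactHedgehogTop (I : Type u) : TopologicalSpace (Hedgehog I) :=
  TopologicalSpace.induced hedgehogPhi inferInstance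

/-- The weight of a topological space: the minimum cardinality of a basis of its topology. -/
noncomputable def weight (X : Type u) [TopologicalSpace X] : Cardinal.{u} :=
  sInf { c : Cardinal.{u} | ∃ B : Set (Set X), TopologicalSpace.IsTopologicalBasis B ∧ #B = c }

/-- A family `A` of subsets of a topological space is discrete if every point has a
neighborhood meeting `A i` for at most one index `i`. -/
def IsDiscreteFamily {X : Type*} [TopologicalSpace X] {ι : Type*} (A : ι → Set X) : Prop :=
  ∀ x : X, ∃ N ∈ nhds x, { i | (A i ∩ N).Nonempty }.Subsingleton

/-- A set-indexed family of subsets of a topological space is discrete if every point has a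
neighborhood meeting at most one member of the family. -/
def IsDiscreteSetFamily {X : Type*} [TopologicalSpace X] (𝒜 : Set (Set X)) : Prop :=
  ∀ x : X, ∃ N ∈ nhds x, { A ∈ 𝒜 | (A ∩ N).Nonempty }.Subsingleton

/-- A topological space `X` is `κ`-collectionwise normal if every discrete family of closed
sets indexed by a set of cardinality `κ` can be separated by a pairwise disjoint family of
open sets. -/
def IsCollectionwiseNormalWrt (κ : Cardinal.{u}) (X : Type v) [TopologicalSpace X] : Prop :=
  ∀ (ι : Type u) (F : ι → Set X), #ι = κ → (∀ i, IsClosed (F i)) → IsDiscreteFamily F →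
    ∃ U : ι → Set X, (∀ i, IsOpen (U i)) ∧ (Pairwise fun i j => Disjoint (U i) (U j)) ∧
      ∀ i, F i ⊆ U i

/-- A topological space is completely metrizable if its topology is induced by some
complete metric. -/
def IsCompletelyMetrizable (X : Type*) [t : TopologicalSpace X] : Prop :=
  ∃ m : MetricSpace X, m.toUniformSpace.toTopologicalSpace = t ∧
    @CompleteSpace X m.toUniformSpace

/-!
A metrizable space of weight `≤ κ` has a base `⋃ₘ 𝒲ₘ` in which each `𝒲ₘ` is a family of pairwise
disjoint open sets (a Stone-type construction along a well-ordering of the space); each `𝒲ₘ` has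
at most `κ` nonempty members, so it can be indexed by the spines. Sending `x ∈ W ∈ 𝒲ₘ` to height
`min 1 (d(x, X ∖ W))` on the spine of `W` is a Lipschitz map to `MJ(κ)` that separates `x` from
the complement of `W`, and these countably many maps together embed `X` into `MJ(κ)^ℕ`.
The weight of `MJ(κ)^ℕ` is `κ`: finitely supported sequences from a dense set of size `κ` in
`MJ(κ)` are dense, while the unit balls around the `κ` tips of the spines are disjoint.
-/

open Metric Function TopologicalSpace

noncomputable local instance {I : Type u} : MetricSpace (Hedgehog I) := metricHedgehog I

namespace Hedgehog

variable {I : Type u}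

open Classical in
noncomputable def distRep (p q : Set.Icc (0:ℝ) 1 × I) : ℝ :=
  if p.2 = q.2 then |(p.1 : ℝ) - q.1| else (p.1 : ℝ) + q.1

theorem distRep_comm (p q : Set.Icc (0:ℝ) 1 × I) : distRep p q = distRep q p := by
  unfold distRep
  rcases eq_or_ne p.2 q.2 with h | h
  · rw [if_pos h, if_pos h.symm, abs_sub_comm]
  · rw [if_neg h, if_neg h.symm, add_comm]

theorem distRep_of_fst_eq_zero {p : Set.Icc (0:ℝ) 1 × I} (hp : (p.1 : ℝ) = 0)
    (q : Set.Icc (0:ℝ) 1 × I) : distRep p q = q.1 := by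
  unfold distRep
  split_ifs <;> simp [hp, abs_of_nonneg q.1.2.1]

theorem distRep_congr_left {p p' : Set.Icc (0:ℝ) 1 × I} (h : hedgehogSetoid I p p')
    (q : Set.Icc (0:ℝ) 1 × I) : distRep p q = distRep p' q := by
  rcases h with ⟨hp, hp'⟩ | rfl
  · rw [distRep_of_fst_eq_zero hp, distRep_of_fst_eq_zero hp']
  · rfl

theorem dist_mk_mk (p q : Set.Icc (0:ℝ) 1 × I) :
    dist (⟦p⟧ : Hedgehog I) ⟦q⟧ = distRep p q := by
  change distRep (⟦p⟧ : Hedgehog I).out (⟦q⟧ : Hedgehog I).out = _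
  rw [distRep_congr_left (Quotient.mk_out p), distRep_comm,
    distRep_congr_left (Quotient.mk_out q), distRep_comm]

theorem dist_mk_mk_self (t s : Set.Icc (0:ℝ) 1) (i : I) :
    dist (⟦(t, i)⟧ : Hedgehog I) ⟦(s, i)⟧ = dist t s := by
  rw [dist_mk_mk, distRep, if_pos rfl, Subtype.dist_eq, Real.dist_eq]

theorem dist_mk_mk_of_ne (t s : Set.Icc (0:ℝ) 1) {i j : I} (h : i ≠ j) :
    dist (⟦(t, i)⟧ : Hedgehog I) ⟦(s, j)⟧ = t + s := by
  rw [dist_mk_mk, distRep, if_neg h]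

theorem isometry_mk (i : I) : Isometry fun t : Set.Icc (0:ℝ) 1 => (⟦(t, i)⟧ : Hedgehog I) :=
  Isometry.of_dist_eq fun t s => dist_mk_mk_self t s i

theorem exists_dense_mk_le_aleph0_mul : ∃ D : Set (Hedgehog I), Dense D ∧ #D ≤ ℵ₀ * #I := by
  obtain ⟨C, hC, hCd⟩ := exists_countable_dense (Set.Icc (0:ℝ) 1)
  refine ⟨range fun q : C × I => ⟦(q.1.1, q.2)⟧, fun x => ?_, ?_⟩
  · obtain ⟨⟨t, i⟩, rfl⟩ := Quotient.exists_rep x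
    have := mem_closure_image (isometry_mk i).continuous.continuousAt (hCd t)
    refine closure_mono ?_ this
    rintro _ ⟨s, hs, rfl⟩
    exact ⟨(⟨s, hs⟩, i), rfl⟩
  · calc #(range fun q : C × I => (⟦(q.1.1, q.2)⟧ : Hedgehog I)) ≤ #(C × I) := mk_range_le
      _ ≤ ℵ₀ * #I := by
        rw [mk_prod, lift_uzero]
        exact mul_le_mul_left (lift_le_aleph0.2 (mk_le_aleph0_iff.2 hC.to_subtype)) _

end Hedgehog

theorem mk_le_weight_of_pairwise_disjoint {X ι : Type u} [TopologicalSpace X] {W : ι → Set X}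
    (hWo : ∀ i, IsOpen (W i)) (hWne : ∀ i, (W i).Nonempty) (hW : Pairwise (Disjoint on W)) :
    #ι ≤ weight X := by
  refine le_csInf ⟨_, _, isTopologicalBasis_opens, rfl⟩ ?_
  rintro _ ⟨B, hB, rfl⟩
  have : ∀ i, ∃ b ∈ B, b.Nonempty ∧ b ⊆ W i := fun i => by
    obtain ⟨x, hx⟩ := hWne i
    obtain ⟨b, hbB, hxb, hbW⟩ := hB.exists_subset_of_mem_open hx (hWo i)
    exact ⟨b, hbB, ⟨x, hxb⟩, hbW⟩
  choose b hbB hbne hbW using this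
  refine mk_le_of_injective (f := fun i => (⟨b i, hbB i⟩ : B)) fun i j hij => ?_
  have hb : b i = b j := congrArg Subtype.val hij
  by_contra hne
  obtain ⟨x, hx⟩ := hbne i
  exact Set.disjoint_left.1 (hW hne) (hbW i hx) (hbW j (hb ▸ hx))

theorem weight_le_of_dense {X : Type u} [TopologicalSpace X] [MetrizableSpace X] {D : Set X}
    (hD : Dense D) : weight X ≤ max ℵ₀ #D := by
  let := metrizableSpaceMetric X
  have hB : IsTopologicalBasis (range fun p : D × ℕ => ball (p.1 : X) (1 / (p.2 + 1))) := by
    refine isTopologicalBasis_of_isOpen_of_nhds (by rintro _ ⟨p, rfl⟩; exact isOpen_ball)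
      fun x U hx hU => ?_
    obtain ⟨ε, hε, hxU⟩ := Metric.isOpen_iff.1 hU x hx
    obtain ⟨n, hn⟩ := exists_nat_one_div_lt (half_pos hε)
    obtain ⟨d, hdD, hxd⟩ := hD.exists_dist_lt x (Nat.one_div_pos_of_nat (n := n))
    refine ⟨_, ⟨(⟨d, hdD⟩, n), rfl⟩, hxd, (ball_subset_ball' ?_).trans hxU⟩
    rw [dist_comm]
    linarith
  calc weight X ≤ #(range fun p : D × ℕ => ball (p.1 : X) (1 / (p.2 + 1))) :=
        csInf_le' ⟨_, hB, rfl⟩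
    _ ≤ #(D × ℕ) := mk_range_le
    _ ≤ max ℵ₀ #D := by
        rw [mk_prod, lift_uzero, mk_nat, lift_aleph0, mul_comm]
        exact (mul_le_max _ _).trans (by simp)

theorem dense_range_getD {Y : Type*} [TopologicalSpace Y] {D : Set Y} (hD : Dense D) (d₀ : D) :
    Dense (range fun (l : List D) (n : ℕ) => (l.getD n d₀ : Y)) := by
  refine dense_iff_inter_open.2 fun U hU ⟨g, hg⟩ => ?_
  obtain ⟨s, u, hu, hsU⟩ := isOpen_pi_iff.1 hU g hg
  have : ∀ n, ∃ d : D, n ∈ s → (d : Y) ∈ u n := fun n => by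
    by_cases hn : n ∈ s
    · obtain ⟨d, hdu, hdD⟩ := hD.inter_open_nonempty _ (hu n hn).1 ⟨g n, (hu n hn).2⟩
      exact ⟨⟨d, hdD⟩, fun _ => hdu⟩
    · exact ⟨d₀, fun h => absurd h hn⟩
  choose d hd using this
  obtain ⟨N, hN⟩ := s.exists_nat_subset_range
  refine ⟨_, hsU fun n hn => ?_, List.ofFn (fun k : Fin N => d k), rfl⟩
  have hnN : n < N := Finset.mem_range.1 (hN hn)
  simpa [hnN] using hd n hn

theorem isEmbedding_pi_of_forall_nhds {X ι : Type*} {Y : ι → Type*} [TopologicalSpace X]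
    [T0Space X] [∀ m, TopologicalSpace (Y m)] {g : ∀ m, X → Y m} (hg : ∀ m, Continuous (g m))
    (hsep : ∀ x, ∀ U ∈ 𝓝 x, ∃ m, ∃ V ∈ 𝓝 (g m x), g m ⁻¹' V ⊆ U) :
    IsEmbedding fun x m => g m x := by
  refine IsInducing.isEmbedding <| isInducing_iff_nhds.2 fun x =>
    le_antisymm ((continuous_pi hg).tendsto x).le_comap fun U hU => ?_
  obtain ⟨m, V, hV, hVU⟩ := hsep x U hU
  exact ⟨_, (continuous_apply m).continuousAt.preimage_mem_nhds hV, hVU⟩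

section HedgehogMap

variable {X : Type*} {I : Type u} [Nonempty I] {W : I → Set X}

open Classical in
noncomputable def memberIndex (W : I → Set X) (x : X) : I :=
  if h : ∃ i, x ∈ W i then h.choose else Classical.arbitrary I

theorem mem_memberIndex {x : X} {i : I} (hx : x ∈ W i) : x ∈ W (memberIndex W x) := by
  have h : ∃ i, x ∈ W i := ⟨i, hx⟩
  rw [memberIndex, dif_pos h]
  exact h.choose_spec

theorem memberIndex_eq (hW : Pairwise (Disjoint on W)) {x : X} {i : I} (hx : x ∈ W i) :
    memberIndex W x = i := by
  by_contra hne
  exact Set.disjoint_left.1 (hW hne) (mem_memberIndex hx) hx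

variable [PseudoMetricSpace X]

noncomputable def height (U : Set X) (x : X) : Set.Icc (0:ℝ) 1 :=
  projIcc 0 1 zero_le_one (infDist x Uᶜ)

theorem lipschitzWith_height (U : Set X) : LipschitzWith 1 (height U) := by
  have := (LipschitzWith.projIcc zero_le_one).comp (lipschitz_infDist_pt Uᶜ)
  rwa [mul_one] at this

theorem height_eq_zero {U : Set X} {x : X} (hx : x ∉ U) : (height U x : ℝ) = 0 := by
  simp [height, infDist_zero_of_mem (mem_compl hx)]

theorem height_le_dist {U : Set X} (x : X) {y : X} (hy : y ∉ U) : (height U x : ℝ) ≤ dist x y :=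
  max_le dist_nonneg ((min_le_right _ _).trans (infDist_le_dist_of_mem hy))

theorem height_pos {U : Set X} (hU : IsOpen U) {x : X} (hx : x ∈ U) (hne : Uᶜ.Nonempty) :
    0 < (height U x : ℝ) :=
  lt_max_of_lt_right (lt_min one_pos
    ((hU.isClosed_compl.notMem_iff_infDist_pos hne).1 (not_not_intro hx)))

noncomputable def hedgehogMap (W : I → Set X) (x : X) : Hedgehog I :=
  ⟦(height (W (memberIndex W x)) x, memberIndex W x)⟧

theorem lipschitzWith_hedgehogMap (hW : Pairwise (Disjoint on W)) :
    LipschitzWith 2 (hedgehogMap W) := by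
  refine LipschitzWith.of_dist_le_mul fun x y => ?_
  rw [hedgehogMap, hedgehogMap, NNReal.coe_ofNat]
  rcases eq_or_ne (memberIndex W x) (memberIndex W y) with h | h
  · rw [h, Hedgehog.dist_mk_mk_self]
    have := (lipschitzWith_height (W (memberIndex W y))).dist_le_mul x y
    rw [NNReal.coe_one, one_mul] at this
    linarith [dist_nonneg (x := x) (y := y)]
  · rw [Hedgehog.dist_mk_mk_of_ne _ _ h, two_mul]
    gcongr
    · exact height_le_dist x fun hy => h (memberIndex_eq hW hy).symm
    · exact dist_comm x y ▸ height_le_dist y fun hx => h (memberIndex_eq hW hx)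

theorem height_le_dist_hedgehogMap (hW : Pairwise (Disjoint on W)) {x y : X} {i : I}
    (hx : x ∈ W i) (hy : y ∉ W i) :
    (height (W i) x : ℝ) ≤ dist (hedgehogMap W x) (hedgehogMap W y) := by
  rw [hedgehogMap, hedgehogMap, memberIndex_eq hW hx]
  rcases eq_or_ne i (memberIndex W y) with h | h
  · rw [← h, Hedgehog.dist_mk_mk_self, Subtype.dist_eq, height_eq_zero hy, Real.dist_eq, sub_zero]
    exact le_abs_self _
  · rw [Hedgehog.dist_mk_mk_of_ne _ _ h]
    linarith [(height (W (memberIndex W y)) y).2.1]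

theorem exists_preimage_hedgehogMap_subset (hW : Pairwise (Disjoint on W)) {i : I}
    (hWi : IsOpen (W i)) {x : X} (hx : x ∈ W i) :
    ∃ V ∈ 𝓝 (hedgehogMap W x), hedgehogMap W ⁻¹' V ⊆ W i := by
  rcases (W i)ᶜ.eq_empty_or_nonempty with h | h
  · exact ⟨univ, Filter.univ_mem, by simp [compl_empty_iff.1 h]⟩
  refine ⟨ball (hedgehogMap W x) (height (W i) x), ball_mem_nhds _ (height_pos hWi hx h),
    fun y hy => ?_⟩
  by_contra hyW
  exact (height_le_dist_hedgehogMap hW hx hyW).not_gt (mem_ball'.1 hy)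

end HedgehogMap

section StoneCell

variable {X : Type*} [PseudoMetricSpace X]

/-- `x` is inserted only to make the set nonempty when `r ≤ 0`. -/
noncomputable def leastCenter (r : ℝ) (x : X) : X :=
  (IsWellFounded.wf (r := (WellOrderingRel : X → X → Prop))).min
    (insert x (ball x r)) (insert_nonempty _ _)

theorem leastCenter_mem_ball {r : ℝ} (hr : 0 < r) (x : X) : leastCenter r x ∈ ball x r := by
  rcases (IsWellFounded.wf (r := (WellOrderingRel : X → X → Prop))).min_mem
    (insert x (ball x r)) (insert_nonempty _ _) with h | h
  · rw [leastCenter, h]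
    exact mem_ball_self hr
  · exact h

theorem not_lt_leastCenter {r : ℝ} {x p : X} (hp : p ∈ ball x r) :
    ¬ WellOrderingRel p (leastCenter r x) :=
  IsWellFounded.wf.not_lt_min _ (mem_insert_of_mem x hp)

def stoneCell (r s : ℝ) (p : X) : Set X :=
  ⋃ x ∈ {x | leastCenter r x = p ∧ ball x (2 * s) ⊆ ball p r}, ball x s

theorem isOpen_stoneCell (r s : ℝ) (p : X) : IsOpen (stoneCell r s p) :=
  isOpen_biUnion fun _ _ => isOpen_ball

theorem stoneCell_subset_ball {r s : ℝ} (hs : 0 < s) (p : X) : stoneCell r s p ⊆ ball p r :=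
  iUnion₂_subset fun _ hx => (ball_subset_ball (by linarith)).trans hx.2

theorem pairwise_disjoint_stoneCell (r s : ℝ) : Pairwise (Disjoint on stoneCell (X := X) r s) := by
  intro p q hpq
  refine Set.disjoint_left.2 fun y hyp hyq => ?_
  simp only [stoneCell, mem_iUnion, mem_ofPred_eq] at hyp hyq
  obtain ⟨x, ⟨rfl, hxp⟩, hyx⟩ := hyp
  obtain ⟨x', ⟨rfl, hx'q⟩, hyx'⟩ := hyq
  have hxx' : dist x x' < 2 * s := by
    linarith [dist_triangle_left x x' y, mem_ball.1 hyx, mem_ball.1 hyx']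
  -- `x` and `x'` are `2 * s`-close, so each least centre lies in the other point's `r`-ball.
  have h₁ := not_lt_leastCenter (mem_ball_comm.1 (hxp (mem_ball'.2 hxx')))
  have h₂ := not_lt_leastCenter (mem_ball_comm.1 (hx'q (mem_ball.2 hxx')))
  rcases trichotomous_of WellOrderingRel (leastCenter r x) (leastCenter r x') with h | h | h
  exacts [h₁ h, hpq h, h₂ h]

theorem exists_mem_stoneCell_subset {x : X} {U : Set X} (hU : U ∈ 𝓝 x) :
    ∃ k n : ℕ, ∃ p, x ∈ stoneCell (1 / (k + 1)) (1 / (n + 1)) p ∧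
      stoneCell (1 / (k + 1)) (1 / (n + 1)) p ⊆ U := by
  obtain ⟨ε, hε, hxU⟩ := Metric.mem_nhds_iff.1 hU
  obtain ⟨k, hk⟩ := exists_nat_one_div_lt (half_pos hε)
  have hr : (0:ℝ) < 1 / (k + 1) := Nat.one_div_pos_of_nat
  set r : ℝ := 1 / (k + 1)
  have hxp := mem_ball'.1 (leastCenter_mem_ball hr x)
  obtain ⟨n, hn⟩ := exists_nat_one_div_lt (half_pos (sub_pos.2 hxp))
  have hs : (0:ℝ) < 1 / (n + 1) := Nat.one_div_pos_of_nat
  refine ⟨k, n, leastCenter r x,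
    mem_biUnion ⟨rfl, ball_subset_ball' ?_⟩ (mem_ball_self hs),
    (stoneCell_subset_ball hs _).trans ((ball_subset_ball' ?_).trans hxU)⟩
  · linarith
  · rw [dist_comm]
    linarith

end StoneCell

theorem exists_pairwise_disjoint_reindex {X P I : Type u} [TopologicalSpace X]
    (hX : weight X ≤ #I) {D : P → Set X} (hDo : ∀ p, IsOpen (D p))
    (hD : Pairwise (Disjoint on D)) :
    ∃ W : I → Set X, (∀ i, IsOpen (W i)) ∧ Pairwise (Disjoint on W) ∧
      ∀ p, (D p).Nonempty → ∃ i, W i = D p := by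
  obtain ⟨e⟩ := (le_def _ _).1 <| (mk_le_weight_of_pairwise_disjoint
    (W := fun p : {p // (D p).Nonempty} => D p) (fun p => hDo p) (fun p => p.2)
    (hD.comp_of_injective Subtype.val_injective)).trans hX
  refine ⟨fun i => ⋃ (p : {p // (D p).Nonempty}) (_ : e p = i), D p,
    fun i => isOpen_biUnion fun p _ => hDo p, fun i j hij => ?_, fun p hp => ⟨e ⟨p, hp⟩, ?_⟩⟩
  · simp only [onFun, disjoint_iUnion_left, disjoint_iUnion_right]
    rintro p rfl q rfl
    exact hD fun hpq => hij (congrArg e (Subtype.ext hpq))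
  · ext y
    simp only [mem_iUnion]
    refine ⟨fun ⟨q, hq, hy⟩ => ?_, fun hy => ⟨⟨p, hp⟩, rfl, hy⟩⟩
    rwa [e.injective hq] at hy

theorem exists_sigma_disjoint_basis {X I : Type u} [MetricSpace X] (hX : weight X ≤ #I) :
    ∃ W : ℕ × ℕ → I → Set X, (∀ m i, IsOpen (W m i)) ∧ (∀ m, Pairwise (Disjoint on W m)) ∧
      ∀ x, ∀ U ∈ 𝓝 x, ∃ m i, x ∈ W m i ∧ W m i ⊆ U := by
  choose W hWo hW hWD using fun kn : ℕ × ℕ => exists_pairwise_disjoint_reindex hX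
    (isOpen_stoneCell (X := X) (1 / (kn.1 + 1)) (1 / (kn.2 + 1))) (pairwise_disjoint_stoneCell _ _)
  refine ⟨W, hWo, hW, fun x U hU => ?_⟩
  obtain ⟨k, n, p, hx, hpU⟩ := exists_mem_stoneCell_subset hU
  obtain ⟨i, hi⟩ := hWD (k, n) p ⟨x, hx⟩
  exact ⟨(k, n), i, hi ▸ hx, hi ▸ hpU⟩

theorem exists_isEmbedding_nat_hedgehog {X I : Type u} [MetricSpace X] [Nonempty I]
    (hX : weight X ≤ #I) : ∃ f : X → ℕ → Hedgehog I, IsEmbedding f := by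
  obtain ⟨W, hWo, hW, hbasis⟩ := exists_sigma_disjoint_basis hX
  refine ⟨_, isEmbedding_pi_of_forall_nhds (g := fun m => hedgehogMap (W m.unpair))
    (fun m => (lipschitzWith_hedgehogMap (hW _)).continuous) fun x U hU => ?_⟩
  obtain ⟨⟨k, n⟩, i, hx, hWU⟩ := hbasis x U hU
  obtain ⟨V, hV, hVW⟩ := exists_preimage_hedgehogMap_subset (hW _) (hWo _ i) hx
  exact ⟨Nat.pair k n, V, by simpa using hV, by simpa using hVW.trans hWU⟩

theorem weight_nat_hedgehog {I : Type u} (hI : ℵ₀ ≤ #I) : weight (ℕ → Hedgehog I) = #I := by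
  obtain ⟨i₀⟩ : Nonempty I := mk_ne_zero_iff.1 (aleph0_pos.trans_le hI).ne'
  let tip (i : I) : Hedgehog I := ⟦(⟨1, by norm_num⟩, i)⟧
  refine le_antisymm ?_ ?_
  · obtain ⟨D, hD, hDI⟩ := Hedgehog.exists_dense_mk_le_aleph0_mul (I := I)
    obtain ⟨d₀, hd₀⟩ := hD.nonempty_iff.2 ⟨tip i₀⟩
    refine (weight_le_of_dense (dense_range_getD hD ⟨d₀, hd₀⟩)).trans (max_le hI ?_)
    calc _ ≤ #(List D) := mk_range_le
      _ ≤ max ℵ₀ #D := mk_list_le_max _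
      _ ≤ #I := max_le hI (hDI.trans (aleph0_mul_eq hI).le)
  · refine mk_le_weight_of_pairwise_disjoint (W := fun i => (· 0) ⁻¹' ball (tip i) 1)
      (fun i => isOpen_ball.preimage (continuous_apply 0))
      (fun i => ⟨fun _ => tip i, mem_ball_self one_pos⟩) fun i j hij => ?_
    refine (ball_disjoint_ball ?_).preimage _
    rw [Hedgehog.dist_mk_mk_of_ne _ _ hij]

/-- Kowalsky's Hedgehog Theorem: for `κ ≥ ℵ₀`, the countable Cartesian power `(MJ(κ))^ℕ`
of the metric hedgehog with `κ` spines is universal in the class of metrizable spaces of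
weight `κ`: it is itself metrizable of weight `κ`, and every metrizable space of weight `κ`
embeds into it. -/
theorem kowalsky_hedgehog_universal (κ : Cardinal.{u}) (hκ : Cardinal.aleph0 ≤ κ)
    (I : Type u) (hI : #I = κ) :
    letI : TopologicalSpace (Hedgehog I) := metricHedgehogTop I
    TopologicalSpace.MetrizableSpace (ℕ → Hedgehog I) ∧
    weight (ℕ → Hedgehog I) = κ ∧
    ∀ (X : Type u) [TopologicalSpace X], TopologicalSpace.MetrizableSpace X →
      weight X = κ → ∃ f : X → (ℕ → Hedgehog I), IsEmbedding f := by
  subst hI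
  have : Nonempty I := mk_ne_zero_iff.1 (aleph0_pos.trans_le hκ).ne'
  refine ⟨(inferInstance : MetrizableSpace (ℕ → Hedgehog I)), weight_nat_hedgehog hκ,
    fun X _ _ hX => ?_⟩
  let := metrizableSpaceMetric X
  exact exists_isEmbedding_nat_hedgehog hX.le
end

section
/- Let X be a normal topological space and {F_n}_{n∈ℕ} a discrete family of closed subsets of X. Then there exists a family {U_n}_{n∈ℕ} of pairwise disjoint open subsets of X with F_n ⊆ U_n for every n ∈ ℕ. -/
open Set Topology Cardinal

universe u v

/-
Normality gives each `F n` an open neighbourhood `G n` whose closure misses the closed set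
`⋃ m ≠ n, F m` (closed because a discrete family is locally finite). The sets
`G n \ ⋃ m < n, closure (G m)` are then open and pairwise disjoint, and still contain `F n`
because `F n` misses every `closure (G m)` with `m < n`.
-/

namespace IsDiscreteFamily

variable {X ι : Type*} [TopologicalSpace X] {F : ι → Set X}

theorem locallyFinite (hd : IsDiscreteFamily F) : LocallyFinite F := fun x =>
  let ⟨N, hN, hsub⟩ := hd x
  ⟨N, hN, hsub.finite⟩

theorem disjoint (hd : IsDiscreteFamily F) {i j : ι} (hij : i ≠ j) : Disjoint (F i) (F j) := by
  refine disjoint_left.mpr fun x hxi hxj => hij ?_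
  obtain ⟨N, hN, hsub⟩ := hd x
  exact hsub ⟨x, hxi, mem_of_mem_nhds hN⟩ ⟨x, hxj, mem_of_mem_nhds hN⟩

theorem isClosed_biUnion_ne (hd : IsDiscreteFamily F) (hcl : ∀ i, IsClosed (F i)) (i : ι) :
    IsClosed (⋃ j ≠ i, F j) := by
  rw [← iUnion_subtype (· ≠ i) fun j => F j]
  exact (hd.locallyFinite.comp_injective Subtype.val_injective).isClosed_iUnion fun j => hcl j

theorem exists_isOpen_closure_disjoint [NormalSpace X] (hd : IsDiscreteFamily F)
    (hcl : ∀ i, IsClosed (F i)) (i : ι) :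
    ∃ G, IsOpen G ∧ F i ⊆ G ∧ ∀ j ≠ i, Disjoint (closure G) (F j) := by
  have hFi : F i ⊆ (⋃ j ≠ i, F j)ᶜ := subset_compl_iff_disjoint_right.mpr <|
    disjoint_iUnion₂_right.mpr fun j hj => hd.disjoint hj.symm
  obtain ⟨G, hG, hFG, hGc⟩ :=
    normal_exists_closure_subset (hcl i) (hd.isClosed_biUnion_ne hcl i).isOpen_compl hFi
  refine ⟨G, hG, hFG, fun j hj => disjoint_right.mpr fun x hxj hxG => hGc hxG ?_⟩
  exact mem_biUnion hj hxj

end IsDiscreteFamily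

theorem exists_isOpen_pairwise_disjoint_of_closure_disjoint {X ι : Type*} [TopologicalSpace X]
    [LinearOrder ι] [LocallyFiniteOrderBot ι] {F G : ι → Set X} (hG : ∀ i, IsOpen (G i))
    (hFG : ∀ i, F i ⊆ G i) (hGF : ∀ i j, i < j → Disjoint (closure (G i)) (F j)) :
    ∃ U : ι → Set X, (∀ i, IsOpen (U i)) ∧ (Pairwise fun i j => Disjoint (U i) (U j)) ∧
      ∀ i, F i ⊆ U i := by
  set U : ι → Set X := fun j => G j \ ⋃ i < j, closure (G i)
  have hU_lt : ∀ i j, i < j → Disjoint (U i) (U j) := fun i j hij =>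
    disjoint_left.mpr fun x hxi hxj => hxj.2 (mem_biUnion hij (subset_closure hxi.1))
  refine ⟨U, fun j => (hG j).sdiff ?_, fun i j hij => ?_, fun j x hx => ⟨hFG j hx, ?_⟩⟩
  · exact (finite_Iio j).isClosed_biUnion fun _ _ => isClosed_closure
  · rcases hij.lt_or_gt with h | h
    exacts [hU_lt i j h, (hU_lt j i h).symm]
  · simp only [mem_iUnion, not_exists]
    exact fun i hij hxi => disjoint_left.mp (hGF i j hij) hxi hx

/-- In a normal space, every countable discrete family of closed sets can be separated by
a family of pairwise disjoint open sets. -/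
theorem normal_separates_countable_discrete_closed (X : Type*) [TopologicalSpace X]
    [NormalSpace X] (F : ℕ → Set X) (hcl : ∀ n, IsClosed (F n))
    (hd : IsDiscreteFamily F) :
    ∃ U : ℕ → Set X, (∀ n, IsOpen (U n)) ∧ (Pairwise fun n m => Disjoint (U n) (U m)) ∧
      ∀ n, F n ⊆ U n := by
  choose G hG hFG hGF using hd.exists_isOpen_closure_disjoint hcl
  exact exists_isOpen_pairwise_disjoint_of_closure_disjoint hG hFG
    fun m n hmn => hGF m n hmn.ne'
end

section
/- The quotient map p : [0,1] × I → J(κ) from the product space onto the quotient hedgehog is a closed map: the image under p of every closed subset of [0,1] × I is closed in J(κ). -/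
open Set Topology Cardinal

universe u v

namespace Setoid

variable {X : Type*} {s : Setoid X} {Z : Set X}

theorem preimage_image_mk_of_inter_nonempty (hs : ∀ x y, s x y ↔ x ∈ Z ∧ y ∈ Z ∨ x = y)
    {C : Set X} (hCZ : (C ∩ Z).Nonempty) :
    Quotient.mk s ⁻¹' (Quotient.mk s '' C) = C ∪ Z := by
  obtain ⟨z, hzC, hzZ⟩ := hCZ
  ext x
  simp only [mem_preimage, mem_image, mem_union, Quotient.eq, hs]
  constructor
  · rintro ⟨y, hyC, ⟨-, hxZ⟩ | rfl⟩
    exacts [Or.inr hxZ, Or.inl hyC]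
  · rintro (hxC | hxZ)
    exacts [⟨x, hxC, Or.inr rfl⟩, ⟨z, hzC, Or.inl ⟨hzZ, hxZ⟩⟩]

theorem preimage_image_mk_of_disjoint (hs : ∀ x y, s x y ↔ x ∈ Z ∧ y ∈ Z ∨ x = y)
    {C : Set X} (hCZ : Disjoint C Z) :
    Quotient.mk s ⁻¹' (Quotient.mk s '' C) = C := by
  ext x
  simp only [mem_preimage, mem_image, Quotient.eq, hs]
  constructor
  · rintro ⟨y, hyC, ⟨hyZ, -⟩ | rfl⟩
    exacts [(hCZ.notMem_of_mem_left hyC hyZ).elim, hyC]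
  · exact fun hxC => ⟨x, hxC, Or.inr rfl⟩

theorem isClosedMap_mk_of_collapse [TopologicalSpace X] (hZ : IsClosed Z)
    (hs : ∀ x y, s x y ↔ x ∈ Z ∧ y ∈ Z ∨ x = y) :
    IsClosedMap (Quotient.mk s) := by
  intro C hC
  refine isQuotientMap_quotient_mk'.isClosed_preimage.mp ?_
  change IsClosed (Quotient.mk s ⁻¹' (Quotient.mk s '' C))
  rcases disjoint_or_nonempty_inter C Z with hCZ | hCZ
  · rwa [preimage_image_mk_of_disjoint hs hCZ]
  · rw [preimage_image_mk_of_inter_nonempty hs hCZ]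
    exact hC.union hZ

end Setoid

/-- The quotient map `p : [0,1] × I → J(κ)` onto the quotient hedgehog is a closed map. -/
theorem quotHedgehog_mk_isClosedMap (I : Type u) :
    @IsClosedMap _ _ (hedgehogBaseTop I) (quotHedgehogTop I)
      (Quotient.mk (hedgehogSetoid I)) := by
  let : TopologicalSpace I := ⊥
  let := hedgehogBaseTop I
  have hZ : IsClosed {x : Set.Icc (0:ℝ) 1 × I | (x.1 : ℝ) = 0} :=
    isClosed_singleton.preimage (continuous_subtype_val.comp continuous_fst)
  exact Setoid.isClosedMap_mk_of_collapse hZ fun _ _ => Iff.rfl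
end

section
/- The topology of the metric hedgehog MJ(κ) equals the initial topology on J(κ) with respect to the family of maps {π_i : J(κ) → [0,1]}_{i∈I} together with π_κ : J(κ) → [0,1], where [0,1] carries the usual topology; i.e., it is the coarsest topology making all these maps continuous. -/
open Set Topology Cardinal

universe u v

/- The maps `π_i` and `π_κ` are 1-Lipschitz for the hedgehog metric, so the metric topology is
finer. Conversely, if `x` lies on the spine `i`, then `d(x, y) ≤ 2 |π_i x - π_i y| + |π_κ x - π_κ y|`
(for `y` on another spine, `π_i y = 0` and `d(x, y) = t + s ≤ 2 t + |t - s|`), so convergence of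
`π_i` and `π_κ` forces convergence in the metric. -/

attribute [local instance] metricHedgehog

namespace Hedgehog

open Filter Classical

variable {I : Type u}

theorem dist_eq (x y : Hedgehog I) :
    dist x y = if x.out.2 = y.out.2 then |(x.out.1 : ℝ) - y.out.1| else x.out.1 + y.out.1 :=
  rfl

theorem coe_hedgehogProj (i : I) (x : Hedgehog I) :
    (hedgehogProj i x : ℝ) = if x.out.2 = i then (x.out.1 : ℝ) else 0 := by
  conv_lhs => rw [← Quotient.out_eq x]
  show ((if x.out.2 = i then x.out.1 else _ : Set.Icc (0:ℝ) 1) : ℝ) = _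
  split_ifs <;> rfl

theorem hedgehogPiKappa_eq_out (x : Hedgehog I) : hedgehogPiKappa x = x.out.1 := by
  conv_lhs => rw [← Quotient.out_eq x]
  rfl

theorem lipschitzWith_hedgehogProj (i : I) : LipschitzWith 1 (hedgehogProj i) := by
  refine LipschitzWith.of_dist_le_mul fun x y => ?_
  have hx := x.out.1.2.1
  have hy := y.out.1.2.1
  rw [NNReal.coe_one, one_mul, Subtype.dist_eq, Real.dist_eq, coe_hedgehogProj,
    coe_hedgehogProj, dist_eq]
  split_ifs <;> grind

theorem lipschitzWith_hedgehogPiKappa : LipschitzWith 1 (hedgehogPiKappa (I := I)) := by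
  refine LipschitzWith.of_dist_le_mul fun x y => ?_
  have hx := x.out.1.2.1
  have hy := y.out.1.2.1
  rw [NNReal.coe_one, one_mul, Subtype.dist_eq, Real.dist_eq, hedgehogPiKappa_eq_out,
    hedgehogPiKappa_eq_out, dist_eq]
  split_ifs <;> grind

theorem dist_le_two_mul_dist_hedgehogProj_add (x y : Hedgehog I) :
    dist y x ≤ 2 * dist (hedgehogProj x.out.2 y) (hedgehogProj x.out.2 x) +
      dist (hedgehogPiKappa y) (hedgehogPiKappa x) := by
  have hx := x.out.1.2.1
  have hy := y.out.1.2.1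
  rw [Subtype.dist_eq, Subtype.dist_eq, Real.dist_eq, Real.dist_eq, coe_hedgehogProj,
    coe_hedgehogProj, hedgehogPiKappa_eq_out, hedgehogPiKappa_eq_out, dist_eq, if_pos rfl]
  split_ifs <;> grind

theorem tendsto_of_tendsto_hedgehogProj {α : Type*} {l : Filter α} {f : α → Hedgehog I}
    {x : Hedgehog I} (hproj : Tendsto (hedgehogProj x.out.2 ∘ f) l (𝓝 (hedgehogProj x.out.2 x)))
    (hκ : Tendsto (hedgehogPiKappa ∘ f) l (𝓝 (hedgehogPiKappa x))) :
    Tendsto f l (𝓝 x) := by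
  have hbound := ((tendsto_iff_dist_tendsto_zero.1 hproj).const_mul 2).add
    (tendsto_iff_dist_tendsto_zero.1 hκ)
  rw [mul_zero, add_zero] at hbound
  exact tendsto_iff_dist_tendsto_zero.2 <| squeeze_zero (fun _ => dist_nonneg)
    (fun a => dist_le_two_mul_dist_hedgehogProj_add x (f a)) hbound

theorem le_metricHedgehogTop {t : TopologicalSpace (Hedgehog I)}
    (hproj : ∀ i, Continuous[t, _] (hedgehogProj i)) (hκ : Continuous[t, _] hedgehogPiKappa) :
    t ≤ metricHedgehogTop I :=
  (le_iff_nhds _ _).2 fun x => Filter.tendsto_id'.1 <|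
    tendsto_of_tendsto_hedgehogProj ((hproj _).tendsto x) (hκ.tendsto x)

end Hedgehog

open Hedgehog in
/-- The topology of the metric hedgehog `MJ(κ)` is the initial topology with respect to
the projections `π_i` (`i ∈ I`) together with `π_κ`, i.e. the coarsest topology making
all of them continuous. -/
theorem metricHedgehogTop_eq_initial (I : Type u) :
    metricHedgehogTop I =
      (⨅ i : I, TopologicalSpace.induced (hedgehogProj i) inferInstance) ⊓
        TopologicalSpace.induced (hedgehogPiKappa (I := I)) inferInstance := by
  refine le_antisymm (le_inf (le_iInf fun i => ?_) ?_) ?_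
  · exact (lipschitzWith_hedgehogProj i).continuous.le_induced
  · exact lipschitzWith_hedgehogPiKappa.continuous.le_induced
  · exact le_metricHedgehogTop
      (fun i => continuous_iff_le_induced.2 (inf_le_left.trans (iInf_le _ i)))
      (continuous_iff_le_induced.2 inf_le_right)
end
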